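/- For every j ≥ 0 and all x, y ∈ ℝ^d, P_j(dν; x, y) = P_j(dμ; x, y) − 𝕂_j(ξ,x)^T (I_N + Λ 𝐊_j)^{−1} Λ 𝕂_j(ξ,y) + 𝕂_{j−1}(ξ,x)^T (I_N + Λ 𝐊_{j−1})^{−1} Λ 𝕂_{j−1}(ξ,y), where P_j(dμ; x, y) = K_j(dμ; x, y) − K_{j−1}(dμ; x, y) and P_j(dν; x, y) = K_j(dν; x, y) − K_{j−1}(dν; x, y) are the reproducing kernels of the orthogonal complement of Π_{j−1}^d in Π_j^d with respect to ⟨·,·⟩_μ and ⟨·,·⟩_ν respectively (with K_{−1} = 0, 𝐊_{−1} = 0, 𝕂_{−1} = 0). -/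

import Mathlib

open MeasureTheory MvPolynomial Matrix Finset

noncomputable section

/-- The space `Π_n^d` of real polynomials in `d` variables of total degree `≤ n`. -/
def piDeg (d n : ℕ) : Submodule ℝ (MvPolynomial (Fin d) ℝ) :=
  MvPolynomial.restrictTotalDegree (Fin d) ℝ n

/-- The inner product `⟨p, q⟩_μ = ∫ p q dμ`. -/
def muInner {d : ℕ} (μ : Measure (Fin d → ℝ)) (p q : MvPolynomial (Fin d) ℝ) : ℝ :=
  ∫ x, eval x p * eval x q ∂μ

/-- The inner product `⟨p, q⟩_ν = ⟨p, q⟩_μ + 𝐩(ξ)^T Λ 𝐪(ξ)`. -/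
def nuInner {d N : ℕ} (μ : Measure (Fin d → ℝ)) (ξ : Fin N → (Fin d → ℝ))
    (Λ : Matrix (Fin N) (Fin N) ℝ) (p q : MvPolynomial (Fin d) ℝ) : ℝ :=
  muInner μ p q + (fun i => eval (ξ i) p) ⬝ᵥ Λ.mulVec (fun i => eval (ξ i) q)

/-- Shift a kernel down by one degree, with the convention `K_{-1} = 0`. -/
def kprev {d : ℕ} (K : ℕ → (Fin d → ℝ) → MvPolynomial (Fin d) ℝ) :
    ℕ → (Fin d → ℝ) → MvPolynomial (Fin d) ℝ
  | 0, _ => 0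
  | n + 1, x => K n x

/-- The matrix `𝐊_n = (K_n(dμ; ξ_i, ξ_j))_{i,j=1}^N` built from a kernel `K`. -/
def bigKmat {d N : ℕ} (ξ : Fin N → (Fin d → ℝ))
    (K : ℕ → (Fin d → ℝ) → MvPolynomial (Fin d) ℝ) (n : ℕ) :
    Matrix (Fin N) (Fin N) ℝ :=
  Matrix.of fun i j => eval (ξ j) (K n (ξ i))

/-- The column vector `𝕂_n(ξ, x) = (K_n(dμ; ξ_1, x), …, K_n(dμ; ξ_N, x))^T`. -/
def vecKmat {d N : ℕ} (ξ : Fin N → (Fin d → ℝ))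
    (K : ℕ → (Fin d → ℝ) → MvPolynomial (Fin d) ℝ) (n : ℕ) (x : Fin d → ℝ) :
    Fin N → ℝ :=
  fun i => eval x (K n (ξ i))

/-! The `ν`-kernel is a finite-rank correction of the `μ`-kernel,
`K_n(dν; x, ·) = K_n(dμ; x, ·) - ∑ aᵢ K_n(dμ; ξᵢ, ·)`, and the `ν`-reproducing property holds
exactly when `Λ (𝕂_n(ξ, x) - 𝐊_n a) = a`, i.e.
`a = (Λ⁻¹ + 𝐊_n)⁻¹ 𝕂_n(ξ, x) = (I + Λ 𝐊_n)⁻¹ Λ 𝕂_n(ξ, x)`. The matrix `Λ⁻¹ + 𝐊_n` is invertible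
because the Gram matrix `𝐊_n` is positive semidefinite, and the candidate is the `ν`-kernel because
`⟨·,·⟩_ν` is positive definite. -/

structure IsReproducingKernel {d : ℕ} (B : MvPolynomial (Fin d) ℝ → MvPolynomial (Fin d) ℝ → ℝ)
    (W : Submodule ℝ (MvPolynomial (Fin d) ℝ)) (k : (Fin d → ℝ) → MvPolynomial (Fin d) ℝ) :
    Prop where
  mem : ∀ x, k x ∈ W
  reproduces : ∀ x, ∀ p ∈ W, B (k x) p = eval x p

lemma Matrix.inv_one_add_mul_mul {n R : Type*} [Fintype n] [DecidableEq n] [CommRing R]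
    {Λ : Matrix n n R} (hΛ : IsUnit Λ.det) (A : Matrix n n R) :
    (1 + Λ * A)⁻¹ * Λ = (Λ⁻¹ + A)⁻¹ := by
  rw [← mul_nonsing_inv Λ hΛ, ← Matrix.mul_add, Matrix.mul_inv_rev,
    Matrix.mul_assoc, nonsing_inv_mul Λ hΛ, Matrix.mul_one]

lemma Matrix.IsSymm.mulVec_dotProduct {n R : Type*} [Fintype n] [CommSemiring R]
    {A : Matrix n n R} (hA : A.IsSymm) (u w : n → R) : A *ᵥ u ⬝ᵥ w = u ⬝ᵥ A *ᵥ w := by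
  rw [dotProduct_mulVec, ← mulVec_transpose, hA.eq]

@[simp]
lemma vecKmat_kprev_zero {d N : ℕ} (ξ : Fin N → (Fin d → ℝ))
    (K : ℕ → (Fin d → ℝ) → MvPolynomial (Fin d) ℝ) (x : Fin d → ℝ) :
    vecKmat ξ (kprev K) 0 x = 0 :=
  funext fun _ => map_zero _

section Inner

variable {d N : ℕ} {μ : Measure (Fin d → ℝ)}

lemma muInner_comm (p q : MvPolynomial (Fin d) ℝ) : muInner μ p q = muInner μ q p := by
  simp_rw [muInner, mul_comm]

lemma muInner_self_nonneg (p : MvPolynomial (Fin d) ℝ) : 0 ≤ muInner μ p p :=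
  integral_nonneg fun _ => mul_self_nonneg _

lemma muInner_sub_left
    (hint : ∀ p q : MvPolynomial (Fin d) ℝ, Integrable (fun x => eval x p * eval x q) μ)
    (p q r : MvPolynomial (Fin d) ℝ) :
    muInner μ (p - q) r = muInner μ p r - muInner μ q r := by
  simp_rw [muInner, map_sub, sub_mul]
  exact integral_sub (hint p r) (hint q r)

lemma muInner_sum_smul_left {ι : Type*} [Fintype ι]
    (hint : ∀ p q : MvPolynomial (Fin d) ℝ, Integrable (fun x => eval x p * eval x q) μ)
    (a : ι → ℝ) (p : ι → MvPolynomial (Fin d) ℝ) (r : MvPolynomial (Fin d) ℝ) :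
    muInner μ (∑ i, a i • p i) r = ∑ i, a i * muInner μ (p i) r := by
  simp_rw [muInner, map_sum, smul_eval, Finset.sum_mul, mul_assoc]
  rw [integral_finsetSum _ fun i _ => (hint (p i) r).const_mul (a i)]
  simp_rw [integral_const_mul]

lemma nuInner_sub_left
    (hint : ∀ p q : MvPolynomial (Fin d) ℝ, Integrable (fun x => eval x p * eval x q) μ)
    (ξ : Fin N → (Fin d → ℝ)) (Λ : Matrix (Fin N) (Fin N) ℝ) (p q r : MvPolynomial (Fin d) ℝ) :
    nuInner μ ξ Λ (p - q) r = nuInner μ ξ Λ p r - nuInner μ ξ Λ q r := by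
  have hξ : (fun i => eval (ξ i) (p - q)) = (fun i => eval (ξ i) p) - fun i => eval (ξ i) q := by
    ext i; simp
  rw [nuInner, muInner_sub_left hint, hξ, sub_dotProduct, nuInner, nuInner]
  ring

lemma nuInner_self_pos
    (hpos : ∀ p : MvPolynomial (Fin d) ℝ, p ≠ 0 → 0 < ∫ x, (eval x p) ^ 2 ∂μ)
    (ξ : Fin N → (Fin d → ℝ)) {Λ : Matrix (Fin N) (Fin N) ℝ} (hΛ : Λ.PosSemidef)
    {p : MvPolynomial (Fin d) ℝ} (hp : p ≠ 0) : 0 < nuInner μ ξ Λ p p := by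
  have hμ : 0 < muInner μ p p := by simpa [muInner, sq] using hpos p hp
  have hξ := hΛ.dotProduct_mulVec_nonneg fun i => eval (ξ i) p
  rw [star_trivial] at hξ
  exact add_pos_of_pos_of_nonneg hμ hξ

lemma eq_of_forall_nuInner_eq
    (hint : ∀ p q : MvPolynomial (Fin d) ℝ, Integrable (fun x => eval x p * eval x q) μ)
    (hpos : ∀ p : MvPolynomial (Fin d) ℝ, p ≠ 0 → 0 < ∫ x, (eval x p) ^ 2 ∂μ)
    (ξ : Fin N → (Fin d → ℝ)) {Λ : Matrix (Fin N) (Fin N) ℝ} (hΛ : Λ.PosSemidef)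
    {W : Submodule ℝ (MvPolynomial (Fin d) ℝ)} {P Q : MvPolynomial (Fin d) ℝ}
    (hP : P ∈ W) (hQ : Q ∈ W) (h : ∀ p ∈ W, nuInner μ ξ Λ P p = nuInner μ ξ Λ Q p) :
    P = Q := by
  by_contra hne
  have hpos' := nuInner_self_pos hpos ξ hΛ (sub_ne_zero.mpr hne)
  rw [nuInner_sub_left hint, h _ (W.sub_mem hP hQ), sub_self] at hpos'
  exact hpos'.false

end Inner

namespace IsReproducingKernel

variable {d N : ℕ} {μ : Measure (Fin d → ℝ)} {W : Submodule ℝ (MvPolynomial (Fin d) ℝ)}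
  {ξ : Fin N → (Fin d → ℝ)} {K : ℕ → (Fin d → ℝ) → MvPolynomial (Fin d) ℝ} {n : ℕ}

lemma eval_comm {k : (Fin d → ℝ) → MvPolynomial (Fin d) ℝ}
    (hk : IsReproducingKernel (muInner μ) W k) (x y : Fin d → ℝ) :
    eval y (k x) = eval x (k y) := by
  rw [← hk.reproduces y _ (hk.mem x), ← hk.reproduces x _ (hk.mem y), muInner_comm]

lemma bigKmat_isSymm (hK : IsReproducingKernel (muInner μ) W (K n)) :
    (bigKmat ξ K n).IsSymm :=
  IsSymm.ext fun i j => hK.eval_comm (ξ j) (ξ i)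

lemma bigKmat_mulVec_apply (hK : IsReproducingKernel (muInner μ) W (K n)) (a : Fin N → ℝ)
    (l : Fin N) : (bigKmat ξ K n *ᵥ a) l = eval (ξ l) (∑ i, a i • K n (ξ i)) := by
  simp only [mulVec, dotProduct, bigKmat, of_apply, map_sum, smul_eval]
  exact Finset.sum_congr rfl fun i _ => by rw [hK.eval_comm, mul_comm]

lemma bigKmat_posSemidef
    (hint : ∀ p q : MvPolynomial (Fin d) ℝ, Integrable (fun x => eval x p * eval x q) μ)
    (hK : IsReproducingKernel (muInner μ) W (K n)) : (bigKmat ξ K n).PosSemidef := by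
  refine .of_dotProduct_mulVec_nonneg (isHermitian_iff_isSymm.mpr hK.bigKmat_isSymm) fun v => ?_
  have hmem : ∑ i, v i • K n (ξ i) ∈ W := W.sum_mem fun i _ => W.smul_mem _ (hK.mem (ξ i))
  have hgram : star v ⬝ᵥ bigKmat ξ K n *ᵥ v =
      muInner μ (∑ i, v i • K n (ξ i)) (∑ i, v i • K n (ξ i)) := by
    rw [star_trivial, muInner_sum_smul_left hint]
    exact Finset.sum_congr rfl fun l _ => by
      rw [hK.bigKmat_mulVec_apply, hK.reproduces _ _ hmem]
  rw [hgram]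
  exact muInner_self_nonneg _

lemma nuInner_sub_sum_smul
    (hint : ∀ p q : MvPolynomial (Fin d) ℝ, Integrable (fun x => eval x p * eval x q) μ)
    {Λ : Matrix (Fin N) (Fin N) ℝ} (hΛ : Λ.IsSymm)
    (hK : IsReproducingKernel (muInner μ) W (K n)) {x : Fin d → ℝ} {a : Fin N → ℝ}
    (ha : Λ *ᵥ (vecKmat ξ K n x - bigKmat ξ K n *ᵥ a) = a) (p : MvPolynomial (Fin d) ℝ)
    (hp : p ∈ W) : nuInner μ ξ Λ (K n x - ∑ i, a i • K n (ξ i)) p = eval x p := by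
  have hμ : muInner μ (K n x - ∑ i, a i • K n (ξ i)) p =
      eval x p - a ⬝ᵥ fun i => eval (ξ i) p := by
    rw [muInner_sub_left hint, muInner_sum_smul_left hint, hK.reproduces x p hp]
    simp only [dotProduct, hK.reproduces _ p hp]
  have hξ : (fun l => eval (ξ l) (K n x - ∑ i, a i • K n (ξ i))) =
      vecKmat ξ K n x - bigKmat ξ K n *ᵥ a := by
    ext l
    rw [Pi.sub_apply, hK.bigKmat_mulVec_apply, map_sub, vecKmat, hK.eval_comm]
  rw [nuInner, hμ, hξ, ← hΛ.mulVec_dotProduct, ha]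
  ring

end IsReproducingKernel

lemma eval_nuKernel {d N : ℕ} {μ : Measure (Fin d → ℝ)}
    (hint : ∀ p q : MvPolynomial (Fin d) ℝ, Integrable (fun x => eval x p * eval x q) μ)
    (hpos : ∀ p : MvPolynomial (Fin d) ℝ, p ≠ 0 → 0 < ∫ x, (eval x p) ^ 2 ∂μ)
    {ξ : Fin N → (Fin d → ℝ)} {Λ : Matrix (Fin N) (Fin N) ℝ} (hΛ : Λ.PosDef)
    {W : Submodule ℝ (MvPolynomial (Fin d) ℝ)} {K K' : ℕ → (Fin d → ℝ) → MvPolynomial (Fin d) ℝ}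
    {n : ℕ} (hK : IsReproducingKernel (muInner μ) W (K n))
    (hK' : IsReproducingKernel (nuInner μ ξ Λ) W (K' n)) (x y : Fin d → ℝ) :
    eval y (K' n x) = eval y (K n x) - vecKmat ξ K n x ⬝ᵥ
      ((1 + Λ * bigKmat ξ K n)⁻¹ * Λ) *ᵥ vecKmat ξ K n y := by
  have hΛsymm : Λ.IsSymm := isHermitian_iff_isSymm.mp hΛ.isHermitian
  have hΛdet : IsUnit Λ.det := hΛ.det_pos.ne'.isUnit
  set B := Λ⁻¹ + bigKmat ξ K n
  have hBdet : IsUnit B.det :=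
    (hΛ.inv.add_posSemidef (hK.bigKmat_posSemidef hint)).det_pos.ne'.isUnit
  have hBsymm : B⁻¹.IsSymm := by
    rw [IsSymm, transpose_nonsing_inv, transpose_add, transpose_nonsing_inv, hΛsymm.eq,
      (hK.bigKmat_isSymm (ξ := ξ)).eq]
  set a := B⁻¹ *ᵥ vecKmat ξ K n x
  have ha : Λ *ᵥ (vecKmat ξ K n x - bigKmat ξ K n *ᵥ a) = a := by
    have hBa : B *ᵥ a = vecKmat ξ K n x := by
      rw [mulVec_mulVec, mul_nonsing_inv B hBdet, one_mulVec]
    rw [← hBa, add_mulVec, add_sub_cancel_right, mulVec_mulVec, mul_nonsing_inv Λ hΛdet,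
      one_mulVec]
  have hK'x : K' n x = K n x - ∑ i, a i • K n (ξ i) :=
    eq_of_forall_nuInner_eq hint hpos ξ hΛ.posSemidef (hK'.mem x)
      (W.sub_mem (hK.mem x) (W.sum_mem fun i _ => W.smul_mem _ (hK.mem (ξ i))))
      fun p hp => by rw [hK'.reproduces x p hp, hK.nuInner_sub_sum_smul hint hΛsymm ha p hp]
  rw [hK'x, inv_one_add_mul_mul hΛdet, ← hBsymm.mulVec_dotProduct, map_sub, map_sum]
  simp only [smul_eval, dotProduct, vecKmat, a]

theorem Pj_kernel_formula_general
    {d N : ℕ}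
    (μ : Measure (Fin d → ℝ))
    (hint : ∀ p q : MvPolynomial (Fin d) ℝ,
      Integrable (fun x => eval x p * eval x q) μ)
    (hpos : ∀ p : MvPolynomial (Fin d) ℝ, p ≠ 0 → 0 < ∫ x, (eval x p) ^ 2 ∂μ)
    (ξ : Fin N → (Fin d → ℝ))
    (Λ : Matrix (Fin N) (Fin N) ℝ) (hΛ : Λ.PosDef)
    (Kmu : ℕ → (Fin d → ℝ) → MvPolynomial (Fin d) ℝ)
    (hKmuMem : ∀ n x, Kmu n x ∈ piDeg d n)
    (hKmuRep : ∀ n x, ∀ p ∈ piDeg d n, muInner μ (Kmu n x) p = eval x p)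
    (Knu : ℕ → (Fin d → ℝ) → MvPolynomial (Fin d) ℝ)
    (hKnuMem : ∀ n x, Knu n x ∈ piDeg d n)
    (hKnuRep : ∀ n x, ∀ p ∈ piDeg d n, nuInner μ ξ Λ (Knu n x) p = eval x p)
    (j : ℕ) (x y : Fin d → ℝ) :
    eval y (Knu j x) - eval y (kprev Knu j x) =
      (eval y (Kmu j x) - eval y (kprev Kmu j x))
      - vecKmat ξ Kmu j x ⬝ᵥ
          ((1 + Λ * bigKmat ξ Kmu j)⁻¹ * Λ).mulVec (vecKmat ξ Kmu j y)
      + vecKmat ξ (kprev Kmu) j x ⬝ᵥ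
          ((1 + Λ * bigKmat ξ (kprev Kmu) j)⁻¹ * Λ).mulVec
            (vecKmat ξ (kprev Kmu) j y) := by
  have formula (n : ℕ) := eval_nuKernel hint hpos hΛ (K := Kmu) (K' := Knu)
    ⟨hKmuMem n, hKmuRep n⟩ ⟨hKnuMem n, hKnuRep n⟩ x y
  have formula_prev : eval y (kprev Knu j x) = eval y (kprev Kmu j x) -
      vecKmat ξ (kprev Kmu) j x ⬝ᵥ
        ((1 + Λ * bigKmat ξ (kprev Kmu) j)⁻¹ * Λ) *ᵥ vecKmat ξ (kprev Kmu) j y := by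
    cases j with
    | zero => simp [kprev]
    | succ m => exact formula m
  rw [formula j, formula_prev]
  ring

/-- For every `j ≥ 0` and all `x, y ∈ ℝ^d`,
`P_j(dν; x, y) = P_j(dμ; x, y) − 𝕂_j(ξ,x)^T (I + Λ𝐊_j)^{−1} Λ 𝕂_j(ξ,y)
  + 𝕂_{j−1}(ξ,x)^T (I + Λ𝐊_{j−1})^{−1} Λ 𝕂_{j−1}(ξ,y)`,
where `P_j = K_j − K_{j−1}` for each of the two inner products, with the conventions
`K_{-1} = 0`, `𝐊_{-1} = 0`, `𝕂_{-1} = 0`. -/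
theorem Pj_kernel_formula
    {d N : ℕ} (hd : 1 ≤ d) (hN : 1 ≤ N)
    (μ : Measure (Fin d → ℝ))
    (hint : ∀ p q : MvPolynomial (Fin d) ℝ,
      Integrable (fun x => eval x p * eval x q) μ)
    (hpos : ∀ p : MvPolynomial (Fin d) ℝ, p ≠ 0 → 0 < ∫ x, (eval x p) ^ 2 ∂μ)
    (ξ : Fin N → (Fin d → ℝ)) (hξ : Function.Injective ξ)
    (Λ : Matrix (Fin N) (Fin N) ℝ) (hΛ : Λ.PosDef)
    (Kmu : ℕ → (Fin d → ℝ) → MvPolynomial (Fin d) ℝ)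
    (hKmuMem : ∀ n x, Kmu n x ∈ piDeg d n)
    (hKmuRep : ∀ n x, ∀ p ∈ piDeg d n, muInner μ (Kmu n x) p = eval x p)
    (Knu : ℕ → (Fin d → ℝ) → MvPolynomial (Fin d) ℝ)
    (hKnuMem : ∀ n x, Knu n x ∈ piDeg d n)
    (hKnuRep : ∀ n x, ∀ p ∈ piDeg d n, nuInner μ ξ Λ (Knu n x) p = eval x p)
    (j : ℕ) (x y : Fin d → ℝ) :
    eval y (Knu j x) - eval y (kprev Knu j x) =
      (eval y (Kmu j x) - eval y (kprev Kmu j x))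
      - vecKmat ξ Kmu j x ⬝ᵥ
          ((1 + Λ * bigKmat ξ Kmu j)⁻¹ * Λ).mulVec (vecKmat ξ Kmu j y)
      + vecKmat ξ (kprev Kmu) j x ⬝ᵥ
          ((1 + Λ * bigKmat ξ (kprev Kmu) j)⁻¹ * Λ).mulVec
            (vecKmat ξ (kprev Kmu) j y) :=
  Pj_kernel_formula_general μ hint hpos ξ Λ hΛ Kmu hKmuMem hKmuRep Knu hKnuMem hKnuRep j x y
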